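/- Let ε > 0. For a ∈ ℝ let T_a be the translation operator on L²(ℝ, ℂ), (T_a f)(x) = f(x+a), and for b ∈ ℝ let M_b be the modulation operator (M_b f)(x) = exp(2πibx/ε) f(x). If T is a bounded linear operator on L²(ℝ, ℂ) satisfying T∘T_a = T_a∘T and T∘M_b = M_b∘T for all a, b ∈ ℝ, then T is a scalar multiple of the identity. -/

import Mathlib

/-!
For `f, g ∈ L²` the function `T f * conj g - f * conj (T† g)` is integrable, and since `T` commutes
with the modulation `M` by `𝐞 (-⟪x, w⟫)`, its Fourier transform at `w` is
`⟪g, T (M f)⟫ - ⟪T† g, M f⟫ = 0`; so it vanishes almost everywhere. Taking for `g` a Gaussian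
`g₀`, which vanishes nowhere, exhibits `T` as the multiplication by `m = T g₀ / g₀`. Commuting with
translations makes `m` translation invariant, and by the Lebesgue differentiation theorem a locally
integrable translation-invariant function is almost everywhere constant.
-/

open Complex Real MeasureTheory Filter Metric Topology FourierTransform
open scoped RealInnerProductSpace ComplexConjugate

theorem setAverage_closedBall_eq_of_forall_add_ae_eq {F E : Type*} [NormedAddCommGroup F]
    [MeasurableSpace F] [BorelSpace F] {μ : Measure F} [μ.IsAddHaarMeasure]
    [NormedAddCommGroup E] [NormedSpace ℝ E] {m : F → E}
    (hm : ∀ a, (fun x => m (x + a)) =ᵐ[μ] m) (x : F) (δ : ℝ) :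
    ⨍ y in closedBall x δ, m y ∂μ = ⨍ y in closedBall 0 δ, m y ∂μ := by
  have hint : ∫ y in closedBall x δ, m y ∂μ = ∫ y in closedBall 0 δ, m y ∂μ := by
    rw [← (measurePreserving_add_right μ x).setIntegral_preimage_emb
      (measurableEmbedding_addRight x), preimage_add_right_closedBall, sub_self]
    exact setIntegral_congr_ae measurableSet_closedBall
      (by filter_upwards [hm x] with y hy _ using hy)
  simp only [setAverage_eq, measureReal_def, Measure.addHaar_closedBall_center, hint]

theorem MeasureTheory.LocallyIntegrable.exists_ae_eq_const_of_forall_add_ae_eq {F E : Type*}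
    [NormedAddCommGroup F] [NormedSpace ℝ F] [FiniteDimensional ℝ F]
    [MeasurableSpace F] [BorelSpace F] {μ : Measure F} [μ.IsAddHaarMeasure]
    [NormedAddCommGroup E] [NormedSpace ℝ E] [CompleteSpace E] {m : F → E}
    (hm : LocallyIntegrable m μ) (hinv : ∀ a, (fun x => m (x + a)) =ᵐ[μ] m) :
    ∃ c, m =ᵐ[μ] fun _ => c := by
  have hlim : ∀ᵐ x ∂μ, Tendsto (fun δ => ⨍ y in closedBall 0 δ, m y ∂μ) (𝓝[>] 0) (𝓝 (m x)) := by
    filter_upwards [IsUnifLocDoublingMeasure.ae_tendsto_average μ hm 1] with x hx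
    have := hx (fun _ => x) (fun δ => δ) tendsto_id
      (eventually_mem_nhdsWithin.mono fun δ hδ => mem_closedBall_self (by simpa using hδ.le))
    simpa only [setAverage_closedBall_eq_of_forall_add_ae_eq hinv] using this
  obtain ⟨x₀, hx₀⟩ := hlim.exists
  exact ⟨m x₀, by filter_upwards [hlim] with x hx using tendsto_nhds_unique hx hx₀⟩

theorem MeasureTheory.L2.integrable_mul_conj {α : Type*} [MeasurableSpace α] {μ : Measure α}
    (f g : Lp ℂ 2 μ) : Integrable (fun x => f x * conj (g x)) μ := by
  simpa only [RCLike.inner_apply] using L2.integrable_inner (𝕜 := ℂ) g f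

section InnerProductSpace

variable {V : Type*} [NormedAddCommGroup V] [InnerProductSpace ℝ V] [FiniteDimensional ℝ V]
  [MeasurableSpace V] [BorelSpace V]

theorem MeasureTheory.Integrable.ae_eq_zero_of_fourier_eq_zero {E : Type*} [NormedAddCommGroup E]
    [NormedSpace ℂ E] [CompleteSpace E] {f : V → E} (hf : Integrable f) (h : 𝓕 f = 0) :
    f =ᵐ[volume] 0 := by
  refine ae_eq_zero_of_integral_contDiff_smul_eq_zero hf.locallyIntegrable
    fun g g_smooth g_cpt => ?_
  let φ : SchwartzMap V ℂ := (g_cpt.comp_left (g := ofRealCLM) rfl).toSchwartzMap (by fun_prop)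
  have hflip : (innerₗ V).flip = innerₗ V := by
    ext x y
    exact real_inner_comm _ _
  calc ∫ x, g x • f x = ∫ x, 𝓕 (𝓕⁻ φ) x • f x := by
        rw [FourierInvPair.fourier_fourierInv_eq]
        simp [φ, Complex.coe_smul]
    _ = ∫ ξ, 𝓕⁻ φ ξ • 𝓕 f ξ := by
        have := VectorFourier.integral_fourierIntegral_smul_eq_flip (L := innerₗ V)
          (μ := volume) (ν := volume) Real.continuous_fourierChar continuous_inner
          (𝓕⁻ φ).integrable hf
        rwa [hflip] at this
    _ = 0 := by simp [h]

theorem memLp_two_cexp_neg_norm_sq : MemLp (fun x : V => cexp (-‖x‖ ^ 2)) 2 volume := by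
  refine (memLp_two_iff_integrable_sq_norm (by fun_prop)).2 ?_
  convert (GaussianFourier.integrable_cexp_neg_mul_sq_norm_add (V := V) (b := 2) (by simp) 0 0).norm
    using 2 with x
  rw [Complex.norm_exp, Complex.norm_exp, ← Real.exp_nat_mul]
  simp

local notation "L²" => Lp ℂ 2 (volume : Measure V)

theorem memLp_fourierChar_mul (w : V) (f : L²) : MemLp (fun x => 𝐞 ⟪x, w⟫ * f x) 2 volume :=
  (Lp.memLp f).of_le ((by fun_prop : Continuous fun x => (𝐞 ⟪x, w⟫ : ℂ)).aestronglyMeasurable.mul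
    (Lp.aestronglyMeasurable f)) (.of_forall fun x => by rw [norm_mul, Circle.norm_coe, one_mul])

def CommutesWithModulations (T : L² →L[ℂ] L²) : Prop :=
  ∀ (w : V) (f g : L²), ((g : V → ℂ) =ᵐ[volume] fun x => 𝐞 ⟪x, w⟫ * f x) →
    ((T g : V → ℂ) =ᵐ[volume] fun x => 𝐞 ⟪x, w⟫ * T f x)

def CommutesWithTranslations (T : L² →L[ℂ] L²) : Prop :=
  ∀ (a : V) (f g : L²), ((g : V → ℂ) =ᵐ[volume] fun x => f (x + a)) →
    ((T g : V → ℂ) =ᵐ[volume] fun x => T f (x + a))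

theorem CommutesWithModulations.fourier_mul_conj_sub_mul_conj_adjoint_eq_zero {T : L² →L[ℂ] L²}
    (hT : CommutesWithModulations T) (f g : L²) :
    𝓕 (fun x => T f x * conj (g x) - f x * conj (T.adjoint g x)) = 0 := by
  ext w
  obtain ⟨h, hh⟩ : ∃ h : L², (h : V → ℂ) =ᵐ[volume] fun x => 𝐞 ⟪x, -w⟫ * f x :=
    ⟨_, (memLp_fourierChar_mul (-w) f).coeFn_toLp⟩
  calc 𝓕 (fun x => T f x * conj (g x) - f x * conj (T.adjoint g x)) w
      = ∫ x, (T h x * conj (g x) - h x * conj (T.adjoint g x)) := by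
        rw [Real.fourier_eq]
        refine integral_congr_ae ?_
        filter_upwards [hh, hT (-w) f h hh] with x h₁ h₂
        rw [h₁, h₂, Circle.smul_def, inner_neg_right, smul_eq_mul]
        ring
    _ = inner ℂ g (T h) - inner ℂ (T.adjoint g) h := by
        rw [integral_sub (L2.integrable_mul_conj _ _) (L2.integrable_mul_conj _ _), L2.inner_def,
          L2.inner_def]
        simp only [RCLike.inner_apply]
    _ = 0 := by rw [ContinuousLinearMap.adjoint_inner_left, sub_self]

theorem CommutesWithModulations.ae_apply_mul_conj_eq {T : L² →L[ℂ] L²}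
    (hT : CommutesWithModulations T) (f g : L²) :
    ∀ᵐ x, T f x * conj (g x) = f x * conj (T.adjoint g x) := by
  have hint := (L2.integrable_mul_conj (T f) g).sub (L2.integrable_mul_conj f (T.adjoint g))
  filter_upwards [hint.ae_eq_zero_of_fourier_eq_zero
    (hT.fourier_mul_conj_sub_mul_conj_adjoint_eq_zero f g)] with x hx
  exact sub_eq_zero.mp hx

theorem CommutesWithModulations.ae_apply_eq_div_mul {T : L² →L[ℂ] L²}
    (hT : CommutesWithModulations T) {g : L²} (hg : ∀ᵐ x, g x ≠ 0) (f : L²) :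
    (T f : V → ℂ) =ᵐ[volume] fun x => T g x / g x * f x := by
  filter_upwards [hg, hT.ae_apply_mul_conj_eq f g, hT.ae_apply_mul_conj_eq g g]
    with x hx hfg hgg
  have hx' : conj (g x) ≠ 0 := by simpa using hx
  field_simp
  apply mul_right_cancel₀ hx'
  linear_combination g x * hfg - f x * hgg

theorem CommutesWithTranslations.ae_add_eq {T : L² →L[ℂ] L²}
    (hT : CommutesWithTranslations T) {m : V → ℂ}
    (hm : ∀ f : L², (T f : V → ℂ) =ᵐ[volume] fun x => m x * f x) {g : L²}
    (hg : ∀ᵐ x, g x ≠ 0) (a : V) : (fun x => m (x + a)) =ᵐ[volume] m := by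
  have hadd := (measurePreserving_add_right volume a).quasiMeasurePreserving
  have hga : MemLp (fun x => g (x + a)) 2 volume :=
    (Lp.memLp g).comp_measurePreserving (measurePreserving_add_right volume a)
  filter_upwards [hadd.ae hg, hm (hga.toLp _), hadd.ae (hm g), hT a g _ hga.coeFn_toLp,
    hga.coeFn_toLp] with x hx h₁ h₂ h₃ h₄
  rw [h₁, h₄, h₂] at h₃
  exact (mul_right_cancel₀ hx h₃).symm

theorem exists_eq_smul_of_commutesWithTranslations_of_commutesWithModulations
    {T : L² →L[ℂ] L²} (htrans : CommutesWithTranslations T) (hmod : CommutesWithModulations T) :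
    ∃ c : ℂ, ∀ f, T f = c • f := by
  obtain ⟨g, hg⟩ : ∃ g : L², (g : V → ℂ) =ᵐ[volume] fun x => cexp (-‖x‖ ^ 2) :=
    ⟨_, memLp_two_cexp_neg_norm_sq.coeFn_toLp⟩
  have hg₀ : ∀ᵐ x, g x ≠ 0 := by
    filter_upwards [hg] with x hx using hx ▸ Complex.exp_ne_zero _
  set m : V → ℂ := fun x => T g x / g x
  have hTm : ∀ f : L², (T f : V → ℂ) =ᵐ[volume] fun x => m x * f x := hmod.ae_apply_eq_div_mul hg₀
  have hm : LocallyIntegrable m volume :=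
    (((Lp.memLp (T g)).locallyIntegrable one_le_two).mul_continuous
      (by fun_prop : Continuous fun x : V => cexp (‖x‖ ^ 2))).congr
      (by filter_upwards [hg] with x hx; simp [m, hx, div_eq_mul_inv, ← Complex.exp_neg])
  obtain ⟨c, hc⟩ := hm.exists_ae_eq_const_of_forall_add_ae_eq (htrans.ae_add_eq hTm hg₀)
  refine ⟨c, fun f => Lp.ext ?_⟩
  filter_upwards [hTm f, hc, Lp.coeFn_smul c f] with x h₁ h₂ h₃
  rw [h₁, h₂, h₃, Pi.smul_apply, smul_eq_mul]

end InnerProductSpace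

theorem commutant_of_heisenberg_representation_is_scalar
    (ε : ℝ) (hε : 0 < ε)
    (T : Lp ℂ 2 (volume : Measure ℝ) →L[ℂ] Lp ℂ 2 (volume : Measure ℝ))
    (hTtrans : ∀ a : ℝ, ∀ f g : Lp ℂ 2 (volume : Measure ℝ),
      ((g : ℝ → ℂ) =ᵐ[volume] fun x => f (x + a)) →
      ((T g : ℝ → ℂ) =ᵐ[volume] fun x => T f (x + a)))
    (hTmod : ∀ b : ℝ, ∀ f g : Lp ℂ 2 (volume : Measure ℝ),
      ((g : ℝ → ℂ) =ᵐ[volume] fun x =>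
        Complex.exp (2 * π * I * ((b * x : ℝ) : ℂ) / (ε : ℂ)) * f x) →
      ((T g : ℝ → ℂ) =ᵐ[volume] fun x =>
        Complex.exp (2 * π * I * ((b * x : ℝ) : ℂ) / (ε : ℂ)) * T f x)) :
    ∃ c : ℂ, ∀ f : Lp ℂ 2 (volume : Measure ℝ), T f = c • f := by
  refine exists_eq_smul_of_commutesWithTranslations_of_commutesWithModulations hTtrans
    fun w f g hg => ?_
  have hchar : ∀ x : ℝ, cexp (2 * π * I * ((ε * w * x : ℝ) : ℂ) / ε) = 𝐞 ⟪x, w⟫ := fun x => by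
    have hε' : (ε : ℂ) ≠ 0 := ofReal_ne_zero.2 hε.ne'
    rw [Real.fourierChar_apply, Real.inner_apply]
    congr 1
    push_cast
    field_simp
  simp only [← hchar] at hg ⊢
  exact hTmod (ε * w) f g hg
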